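/- For any vertex v of G and any s with coreness(v) < s, the number of neighbors u of v with coreness(u) ≥ s is strictly less than s. -/

import Mathlib

/-!
If `v` had at least `s` neighbours of coreness `≥ s`, those neighbours all lie in the `s`-core,
so adding `v` to the `s`-core keeps the minimum degree at least `s`. Hence `v` would itself
lie in the `s`-core, i.e. have coreness at least `s`.
-/

open scoped Classical
open Finset

noncomputable section

variable {V : Type*} [Fintype V]

/-- `S` induces a subgraph of `G` in which every vertex has degree at least `k`. -/
def IsCoreSet (G : SimpleGraph V) (k : ℕ) (S : Finset V) : Prop :=
  ∀ v ∈ S, k ≤ (S.filter (G.Adj v)).card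

/-- The vertex set of the `k`-core of `G`: all vertices lying in some induced
subgraph of minimum degree at least `k`. -/
def coreSet (G : SimpleGraph V) (k : ℕ) : Finset V :=
  Finset.univ.filter fun v => ∃ S : Finset V, IsCoreSet G k S ∧ v ∈ S

/-- The coreness of `v`: the largest `k` such that `v` belongs to the `k`-core. -/
def coreness (G : SimpleGraph V) (v : V) : ℕ :=
  Nat.findGreatest (fun k => v ∈ coreSet G k) (Fintype.card V)

namespace IsCoreSet

section

variable {α : Type*} {G : SimpleGraph α} {j k : ℕ} {S : Finset α}

theorem of_le (hjk : j ≤ k) (hS : IsCoreSet G k S) : IsCoreSet G j S :=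
  fun v hv => hjk.trans (hS v hv)

theorem insert (hS : IsCoreSet G k S) {v : α} (hv : k ≤ (S.filter (G.Adj v)).card) :
    IsCoreSet G k (Insert.insert v S) := by
  have hmono : ∀ w, (S.filter (G.Adj w)).card ≤ ((Insert.insert v S).filter (G.Adj w)).card :=
    fun w => card_le_card (filter_subset_filter _ (subset_insert v S))
  intro w hw
  rcases mem_insert.mp hw with rfl | hwS
  · exact hv.trans (hmono w)
  · exact (hS w hwS).trans (hmono w)

end

theorem le_card {G : SimpleGraph V} {k : ℕ} {S : Finset V} (hS : IsCoreSet G k S) {v : V}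
    (hv : v ∈ S) : k ≤ Fintype.card V :=
  (hS v hv).trans (card_le_univ _)

end IsCoreSet

section Core

variable (G : SimpleGraph V) {k : ℕ} {v : V}

theorem mem_coreSet_iff : v ∈ coreSet G k ↔ ∃ S : Finset V, IsCoreSet G k S ∧ v ∈ S := by
  simp [coreSet]

theorem IsCoreSet.subset_coreSet {S : Finset V} (hS : IsCoreSet G k S) : S ⊆ coreSet G k :=
  fun _ hv => (mem_coreSet_iff G).2 ⟨S, hS, hv⟩

theorem isCoreSet_coreSet (k : ℕ) : IsCoreSet G k (coreSet G k) := by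
  intro v hv
  obtain ⟨S, hS, hvS⟩ := (mem_coreSet_iff G).1 hv
  exact (hS v hvS).trans
    (card_le_card (filter_subset_filter _ (IsCoreSet.subset_coreSet G hS)))

theorem le_coreness_iff_mem_coreSet : k ≤ coreness G v ↔ v ∈ coreSet G k := by
  have hmem_zero : v ∈ coreSet G 0 :=
    (mem_coreSet_iff G).2 ⟨{v}, fun _ _ => Nat.zero_le _, mem_singleton_self v⟩
  constructor
  · intro hk
    obtain ⟨S, hS, hvS⟩ := (mem_coreSet_iff G).1
      (Nat.findGreatest_spec (P := fun k => v ∈ coreSet G k) (Nat.zero_le _) hmem_zero)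
    exact (mem_coreSet_iff G).2 ⟨S, hS.of_le hk, hvS⟩
  · intro hv
    obtain ⟨S, hS, hvS⟩ := (mem_coreSet_iff G).1 hv
    exact Nat.le_findGreatest (hS.le_card hvS) hv

end Core

theorem card_neighbors_coreness_ge_lt (G : SimpleGraph V) (v : V) (s : ℕ)
    (h : coreness G v < s) :
    (Finset.univ.filter fun u => G.Adj v u ∧ s ≤ coreness G u).card < s := by
  by_contra! hcard
  have hneighbors : (Finset.univ.filter fun u => G.Adj v u ∧ s ≤ coreness G u) ⊆
      (coreSet G s).filter (G.Adj v) := by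
    intro u hu
    simp only [mem_filter, mem_univ, true_and] at hu
    exact mem_filter.2 ⟨(le_coreness_iff_mem_coreSet G).1 hu.2, hu.1⟩
  have hcore : IsCoreSet G s (insert v (coreSet G s)) :=
    (isCoreSet_coreSet G s).insert (hcard.trans (card_le_card hneighbors))
  have hv : v ∈ coreSet G s := IsCoreSet.subset_coreSet G hcore (mem_insert_self v _)
  exact h.not_ge ((le_coreness_iff_mem_coreSet G).2 hv)

end
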